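/- arXiv:2012.09391 — 7 statements merged into one kernel-verified Lean document; each statement's English description precedes it below -/
import Mathlib

section
/- Let Γ be a graph whose adjacency matrix has smallest eigenvalue at least -m (with m ≥ 1), and suppose Γ contains H(a,t) as an induced subgraph (a, t positive integers). Then (a - m(m-1))·(t - (m-1)²) ≤ (m(m-1))². -/
/-!
Since every eigenvalue of `A = G.adjMatrix ℝ` is at least `-m`, the matrix `A + m` is positive
semidefinite, so `-m ‖v‖² ≤ vᵀ A v` for every `v`. Take `v` constant on the three cells `{x}`,
`N = s ∩ N(x)` and `M = s \ N(x)`, with values `c`, `p`, `q`. Inside the clique `s` this partition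
is equitable, so `A v` is again constant on the cells and both sides become quadratic forms in
`(c, p, q)`. For `(c, p, q) = (-a B, m B, -m a)` with `B = t + m - 1`, the vector `(A + m) v`
vanishes at `x` and on `M`, and the inequality collapses to
`0 ≤ m a B · ((m (m - 1))² - (a - m (m - 1)) (t - (m - 1)²))`.
-/

open Finset Matrix SimpleGraph

theorem Matrix.IsHermitian.posSemidef_algebraMap_add {n : Type*} [Fintype n] [DecidableEq n]
    {A : Matrix n n ℝ} (hA : A.IsHermitian) {m : ℝ} (h : ∀ μ ∈ spectrum ℝ A, -m ≤ μ) :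
    (algebraMap ℝ (Matrix n n ℝ) m + A).PosSemidef := by
  refine posSemidef_iff_isHermitian_and_spectrum_nonneg.mpr
    ⟨(IsSelfAdjoint.algebraMap _ (.all m)).add hA, fun μ hμ => ?_⟩
  rw [← sub_add_cancel μ m, spectrum.add_mem_add_iff] at hμ
  simpa using h _ hμ

theorem Matrix.IsHermitian.neg_mul_dotProduct_self_le {n : Type*} [Fintype n] [DecidableEq n]
    {A : Matrix n n ℝ} (hA : A.IsHermitian) {m : ℝ} (h : ∀ μ ∈ spectrum ℝ A, -m ≤ μ)
    (v : n → ℝ) : -m * (v ⬝ᵥ v) ≤ v ⬝ᵥ (A *ᵥ v) := by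
  have := (hA.posSemidef_algebraMap_add h).dotProduct_mulVec_nonneg v
  rw [add_mulVec, Algebra.algebraMap_eq_smul_one, smul_mulVec, one_mulVec, dotProduct_add,
    dotProduct_smul, star_trivial, smul_eq_mul] at this
  linarith

theorem Finset.indicator_one_dotProduct {V R : Type*} [Fintype V] [NonAssocSemiring R]
    (S : Finset V) (w : V → R) :
    (S : Set V).indicator 1 ⬝ᵥ w = ∑ y ∈ S, w y := by
  classical
  simp [dotProduct, Set.indicator_apply]

theorem SimpleGraph.IsClique.filter_adj_eq_erase {V : Type*} [DecidableEq V] {G : SimpleGraph V}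
    [DecidableRel G.Adj] {s T : Finset V} (hs : G.IsClique (s : Set V)) {y : V} (hy : y ∈ s)
    (hT : T ⊆ s) : {z ∈ T | G.Adj y z} = T.erase y := by
  ext z
  simp only [mem_filter, mem_erase]
  exact ⟨fun ⟨hz, hyz⟩ => ⟨hyz.ne', hz⟩, fun ⟨hzy, hz⟩ => ⟨hz, hs hy (hT hz) (Ne.symm hzy)⟩⟩

namespace SimpleGraph

variable {V : Type*} (G : SimpleGraph V) [DecidableRel G.Adj]

theorem adjMatrix_mulVec_indicator_one [Fintype V] {R : Type*} [NonAssocSemiring R]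
    (S : Finset V) (y : V) :
    (G.adjMatrix R *ᵥ (S : Set V).indicator 1) y = #{z ∈ S | G.Adj y z} := by
  classical
  simp [mulVec, dotProduct, Set.indicator_apply, adjMatrix_apply, ← ite_and, sum_boole,
    ← filter_filter]

noncomputable def hatVector (s : Finset V) (x : V) (c p q : ℝ) : V → ℝ :=
  c • (({x} : Finset V) : Set V).indicator 1
    + p • (({y ∈ s | G.Adj x y} : Finset V) : Set V).indicator 1
    + q • (({y ∈ s | ¬G.Adj x y} : Finset V) : Set V).indicator 1

variable {G} {s : Finset V} {x : V} {c p q : ℝ}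

theorem hatVector_dotProduct [Fintype V] (w : V → ℝ) :
    G.hatVector s x c p q ⬝ᵥ w
      = c * w x + p * ∑ y ∈ s with G.Adj x y, w y + q * ∑ y ∈ s with ¬G.Adj x y, w y := by
  simp only [hatVector, add_dotProduct, smul_dotProduct, indicator_one_dotProduct, smul_eq_mul,
    sum_singleton]

theorem adjMatrix_mulVec_hatVector_apply [Fintype V] (y : V) :
    (G.adjMatrix ℝ *ᵥ G.hatVector s x c p q) y
      = c * #{z ∈ {x} | G.Adj y z} + p * #{z ∈ s | G.Adj x z ∧ G.Adj y z}
        + q * #{z ∈ s | ¬G.Adj x z ∧ G.Adj y z} := by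
  simp only [hatVector, mulVec_add, mulVec_smul, Pi.add_apply, Pi.smul_apply, smul_eq_mul,
    adjMatrix_mulVec_indicator_one, filter_filter]

theorem hatVector_apply_self (hx : x ∉ s) : G.hatVector s x c p q x = c := by
  simp [hatVector, hx]

theorem hatVector_apply_of_adj {y : V} (hy : y ∈ s) (hxy : G.Adj x y) :
    G.hatVector s x c p q y = p := by
  simp [hatVector, hy, hxy, hxy.ne']

theorem hatVector_apply_of_not_adj (hx : x ∉ s) {y : V} (hy : y ∈ s) (hxy : ¬G.Adj x y) :
    G.hatVector s x c p q y = q := by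
  simp [hatVector, hy, hxy, (ne_of_mem_of_not_mem hy hx)]

variable [Fintype V] {a t : ℕ} (hN : #{y ∈ s | G.Adj x y} = a) (hM : #{y ∈ s | ¬G.Adj x y} = t)
include hN

theorem adjMatrix_mulVec_hatVector_apply_self :
    (G.adjMatrix ℝ *ᵥ G.hatVector s x c p q) x = a * p := by
  rw [adjMatrix_mulVec_hatVector_apply]
  simp [filter_singleton, hN, mul_comm]

include hM

theorem hatVector_dotProduct_self (hx : x ∉ s) :
    G.hatVector s x c p q ⬝ᵥ G.hatVector s x c p q = c ^ 2 + a * p ^ 2 + t * q ^ 2 := by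
  rw [hatVector_dotProduct, hatVector_apply_self hx,
    sum_eq_card_nsmul fun y hy => by rw [(mem_filter.mp hy).elim hatVector_apply_of_adj],
    sum_eq_card_nsmul fun y hy => by rw [(mem_filter.mp hy).elim (hatVector_apply_of_not_adj hx)],
    hN, hM, nsmul_eq_mul, nsmul_eq_mul]
  ring

variable [DecidableEq V] (hs : G.IsClique (s : Set V))
include hs

theorem adjMatrix_mulVec_hatVector_apply_of_adj {y : V} (hy : y ∈ s) (hxy : G.Adj x y) :
    (G.adjMatrix ℝ *ᵥ G.hatVector s x c p q) y = c + (a - 1) * p + t * q := by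
  have hyM : y ∉ {z ∈ s | ¬G.Adj x z} := by simp [hxy]
  rw [adjMatrix_mulVec_hatVector_apply, ← filter_filter, ← filter_filter,
    hs.filter_adj_eq_erase hy (filter_subset _ _), hs.filter_adj_eq_erase hy (filter_subset _ _),
    cast_card_erase_of_mem (mem_filter.mpr ⟨hy, hxy⟩), erase_eq_of_notMem hyM]
  simp [filter_singleton, hxy.symm, hN, hM]
  ring

theorem adjMatrix_mulVec_hatVector_apply_of_not_adj {y : V} (hy : y ∈ s) (hxy : ¬G.Adj x y) :
    (G.adjMatrix ℝ *ᵥ G.hatVector s x c p q) y = a * p + (t - 1) * q := by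
  have hyN : y ∉ {z ∈ s | G.Adj x z} := by simp [hxy]
  have hyx : ¬G.Adj y x := fun h => hxy h.symm
  rw [adjMatrix_mulVec_hatVector_apply, ← filter_filter, ← filter_filter,
    hs.filter_adj_eq_erase hy (filter_subset _ _), hs.filter_adj_eq_erase hy (filter_subset _ _),
    erase_eq_of_notMem hyN, cast_card_erase_of_mem (mem_filter.mpr ⟨hy, hxy⟩)]
  simp [filter_singleton, hyx, hN, hM]
  ring

theorem hatVector_dotProduct_adjMatrix_mulVec :
    G.hatVector s x c p q ⬝ᵥ (G.adjMatrix ℝ *ᵥ G.hatVector s x c p q)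
      = 2 * a * c * p + a * (a - 1) * p ^ 2 + 2 * a * t * p * q + t * (t - 1) * q ^ 2 := by
  rw [hatVector_dotProduct, adjMatrix_mulVec_hatVector_apply_self hN,
    sum_eq_card_nsmul fun y hy => by
      rw [(mem_filter.mp hy).elim (adjMatrix_mulVec_hatVector_apply_of_adj hN hM hs)],
    sum_eq_card_nsmul fun y hy => by
      rw [(mem_filter.mp hy).elim (adjMatrix_mulVec_hatVector_apply_of_not_adj hN hM hs)],
    hN, hM, nsmul_eq_mul, nsmul_eq_mul]
  ring

end SimpleGraph

/-- If a graph `Γ` has all adjacency eigenvalues at least `-m` (with `m ≥ 1`) and contains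
`H(a,t)` as an induced subgraph (a clique of order `a+t` together with a vertex `x` outside
it adjacent to exactly `a` of its vertices, `a, t ≥ 1`), then
`(a - m(m-1))·(t - (m-1)²) ≤ (m(m-1))²`. -/
theorem hat_subgraph_bound {V : Type*} [Fintype V] [DecidableEq V]
    (G : SimpleGraph V) [DecidableRel G.Adj] (m : ℝ) (hm : 1 ≤ m)
    (hspec : ∀ x ∈ spectrum ℝ (G.adjMatrix ℝ), -m ≤ x)
    (a t : ℕ) (ha : 1 ≤ a) (ht : 1 ≤ t)
    (s : Finset V) (x : V) (hx : x ∉ s)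
    (hclique : G.IsClique (s : Set V)) (hcard : s.card = a + t)
    (hnbr : (s.filter (fun y => G.Adj x y)).card = a) :
    ((a : ℝ) - m * (m - 1)) * ((t : ℝ) - (m - 1) ^ 2) ≤ (m * (m - 1)) ^ 2 := by
  have hM : #{y ∈ s | ¬G.Adj x y} = t := by
    have := card_filter_add_card_filter_not (s := s) (fun y => G.Adj x y)
    omega
  set B : ℝ := t + m - 1
  have key := (G.isHermitian_adjMatrix ℝ).neg_mul_dotProduct_self_le hspec
    (G.hatVector s x (-(a * B)) (m * B) (-(m * a)))
  rw [hatVector_dotProduct_self hnbr hM hx,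
    hatVector_dotProduct_adjMatrix_mulVec hnbr hM hclique] at key
  have hB : 0 < m * a * B := by
    have : (1 : ℝ) ≤ a := by exact_mod_cast ha
    have : (1 : ℝ) ≤ t := by exact_mod_cast ht
    have : 0 < B := by linarith
    positivity
  have hX : 0 ≤ m * (m - 1) ^ 2 - a * t + a * (m - 1) ^ 2 + m * (m - 1) * t :=
    nonneg_of_mul_nonneg_right (by linear_combination key) hB
  linear_combination hX
end

section
/- Let Γ be a graph with smallest adjacency eigenvalue -m such that any two non-adjacent vertices have at most μ common neighbors. Suppose Γ has a maximal clique C of order c ≥ (m-1)(4m-1) and a vertex y ∉ C with a neighbors in C. If μ < (c+m-1+√D)/2, where D = (c+m-1)(c-(m-1)(4m-1)), then a ≤ (c+m-1-√D)/2. -/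
/-!
Since `-m` is the least eigenvalue, `A + m • 1` is positive semidefinite. Split the clique `C`
into `S`, the `a` neighbours of `y`, and `T = C \ S`, of size `t = c - a ≥ 1` by maximality.
Testing `A + m • 1` on the vectors that are constant on `S`, on `T` and on `{y}` shows that a
`3 × 3` quotient matrix is positive semidefinite; its determinant is `a t f(a)` with
`f(a) = a² - (c+m-1) a + m(m-1)(c+m-1)`, so `f(a) ≥ 0` (for `a = 0` because the least eigenvalue of
a graph is `0` or at most `-1`). The roots of `f` are `(c+m-1 ± √D)/2`, and `a ≤ μ < (c+m-1+√D)/2`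
since `S` consists of common neighbours of `y` and a non-neighbour of `y` in `C`.
-/

open Finset Matrix

theorem Matrix.IsHermitian.posSemidef_add_smul_one {n : Type*} [Fintype n] [DecidableEq n]
    {A : Matrix n n ℝ} (hA : A.IsHermitian) {m : ℝ} (hm : -m ∈ lowerBounds (spectrum ℝ A)) :
    (A + m • (1 : Matrix n n ℝ)).PosSemidef := by
  refine posSemidef_iff_isHermitian_and_spectrum_nonneg.mpr
    ⟨hA.add (isHermitian_one.smul (IsSelfAdjoint.all m)), ?_⟩
  rw [← Algebra.algebraMap_eq_smul_one, ← spectrum.add_singleton_eq]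
  rintro _ ⟨r, hr, s, hs, rfl⟩
  rw [Set.mem_singleton_iff.mp hs]
  show 0 ≤ r + m
  linarith [hm hr]

theorem le_of_sq_sub_mul_add_nonneg_of_lt {x p q : ℝ} (h : 0 ≤ x ^ 2 - p * x + q)
    (hlt : x < (p + √(p ^ 2 - 4 * q)) / 2) : x ≤ (p - √(p ^ 2 - 4 * q)) / 2 := by
  rcases le_or_gt 0 (p ^ 2 - 4 * q) with hd | hd
  · have hsq := Real.sq_sqrt hd
    nlinarith [Real.sqrt_nonneg (p ^ 2 - 4 * q)]
  · rw [Real.sqrt_eq_zero'.mpr hd.le] at hlt ⊢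
    linarith

theorem Finset.sum_univ_eq_add_sum_of_support_subset_insert {ι M : Type*} [Fintype ι]
    [DecidableEq ι] [AddCommMonoid M] {s : Finset ι} {i : ι} (hi : i ∉ s) {f : ι → M}
    (hf : ∀ j ∉ insert i s, f j = 0) :
    ∑ j, f j = f i + ∑ j ∈ s, f j := by
  rw [← sum_subset (subset_univ _) fun j _ hj => hf j hj, sum_insert hi]

namespace SimpleGraph

variable {V : Type*} [Fintype V] [DecidableEq V] {G : SimpleGraph V} [DecidableRel G.Adj]
  {C : Finset V} {y : V} {m : ℝ}

theorem dotProduct_adjMatrix_mulVec_of_isClique (hC : G.IsClique (C : Set V)) (hy : y ∉ C)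
    {x : V → ℝ} (hx : ∀ u ∉ insert y C, x u = 0) :
    x ⬝ᵥ (G.adjMatrix ℝ *ᵥ x) =
      (∑ u ∈ C, x u) ^ 2 - ∑ u ∈ C, x u ^ 2 + 2 * x y * ∑ u ∈ C with G.Adj y u, x u := by
  have hrow (u : V) : (G.adjMatrix ℝ *ᵥ x) u =
      (if G.Adj u y then x y else 0) + ∑ w ∈ C with G.Adj u w, x w := by
    rw [mulVec, dotProduct, sum_univ_eq_add_sum_of_support_subset_insert hy
      (fun w hw => by rw [hx w hw, mul_zero]), sum_filter]
    simp [adjMatrix_apply]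
  have hclique_row (u : V) (hu : u ∈ C) : ∑ w ∈ C with G.Adj u w, x w = ∑ w ∈ C, x w - x u := by
    rw [← sum_erase_eq_sub hu]
    congr 1
    ext w
    simp only [mem_filter, mem_erase]
    exact ⟨fun h => ⟨(G.ne_of_adj h.2).symm, h.1⟩, fun h => ⟨h.2, hC hu h.2 (Ne.symm h.1)⟩⟩
  rw [dotProduct, sum_univ_eq_add_sum_of_support_subset_insert hy
    (fun u hu => by rw [hx u hu, zero_mul]), hrow, if_neg G.irrefl, zero_add]
  have hC_row : ∑ u ∈ C, x u * (G.adjMatrix ℝ *ᵥ x) u =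
      x y * ∑ u ∈ C with G.Adj y u, x u + ((∑ u ∈ C, x u) ^ 2 - ∑ u ∈ C, x u ^ 2) := by
    rw [sum_congr rfl fun u hu => by rw [hrow, hclique_row u hu]]
    simp only [mul_add, mul_sub, sum_add_distrib, sum_sub_distrib, mul_ite, mul_zero,
      ← sum_filter, ← sum_mul, G.adj_comm _ y, sq]
    ring
  rw [hC_row]
  ring

theorem quotient_form_nonneg_of_isClique
    (hB : (G.adjMatrix ℝ + m • (1 : Matrix V V ℝ)).PosSemidef) (hC : G.IsClique (C : Set V))
    (hy : y ∉ C) {a t : ℕ} (ha : #{u ∈ C | G.Adj y u} = a)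
    (ht : #{u ∈ C | ¬G.Adj y u} = t) (α β γ : ℝ) :
    0 ≤ (a * α + t * β) ^ 2 - (a * α ^ 2 + t * β ^ 2) + 2 * a * α * γ +
      m * (a * α ^ 2 + t * β ^ 2 + γ ^ 2) := by
  set x : V → ℝ := fun u => if u ∈ C then (if G.Adj y u then α else β) else if u = y then γ else 0
  have hx : ∀ u ∉ insert y C, x u = 0 := fun u hu => by
    rw [mem_insert, not_or] at hu
    simp [x, hu.1, hu.2]
  have hxC : ∀ u ∈ C, x u = if G.Adj y u then α else β := fun u hu => if_pos hu
  have hxy : x y = γ := by simp [x, hy]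
  have hsum : ∑ u ∈ C, x u = a * α + t * β := by
    rw [sum_congr rfl hxC, sum_ite, sum_const, sum_const, ha, ht, nsmul_eq_mul, nsmul_eq_mul]
  have hsum_sq : ∑ u ∈ C, x u ^ 2 = a * α ^ 2 + t * β ^ 2 := by
    rw [sum_congr rfl fun u hu => by rw [hxC u hu, apply_ite (· ^ 2)], sum_ite, sum_const,
      sum_const, ha, ht, nsmul_eq_mul, nsmul_eq_mul]
  have hsum_adj : ∑ u ∈ C with G.Adj y u, x u = a * α := by
    rw [sum_congr rfl fun u hu => by rw [hxC u (mem_filter.mp hu).1, if_pos (mem_filter.mp hu).2],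
      sum_const, ha, nsmul_eq_mul]
  have hnorm : x ⬝ᵥ x = x y ^ 2 + ∑ u ∈ C, x u ^ 2 := by
    rw [dotProduct, sum_univ_eq_add_sum_of_support_subset_insert hy
      (fun u hu => by rw [hx u hu, mul_zero])]
    simp only [sq]
  have h := hB.dotProduct_mulVec_nonneg x
  rw [star_trivial, add_mulVec, dotProduct_add, smul_mulVec, one_mulVec, dotProduct_smul,
    dotProduct_adjMatrix_mulVec_of_isClique hC hy hx, hnorm, hsum, hsum_sq, hsum_adj, hxy,
    smul_eq_mul] at h
  linarith

theorem one_le_of_adj (hB : (G.adjMatrix ℝ + m • (1 : Matrix V V ℝ)).PosSemidef) {u v : V}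
    (huv : G.Adj u v) : 1 ≤ m := by
  have h := quotient_form_nonneg_of_isClique hB (by simp) (mem_singleton.not.mpr huv.ne.symm)
    (a := 1) (by rw [filter_singleton, if_pos huv.symm, card_singleton]) rfl 1 0 (-1)
  norm_num at h
  linarith

theorem eq_zero_or_one_le_of_isLeast_spectrum_adjMatrix
    (hspec : IsLeast (spectrum ℝ (G.adjMatrix ℝ)) (-m)) : m = 0 ∨ 1 ≤ m := by
  by_cases hE : ∃ u v, G.Adj u v
  · obtain ⟨u, v, huv⟩ := hE
    exact .inr (one_le_of_adj ((G.isHermitian_adjMatrix ℝ).posSemidef_add_smul_one hspec.2) huv)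
  · have hA : G.adjMatrix ℝ = 0 := by
      ext u v
      simp [adjMatrix_apply, not_exists.mp (not_exists.mp hE u) v]
    have h := hspec.1
    rw [hA, spectrum.mem_iff, sub_zero] at h
    left
    by_contra hm
    exact h ((isUnit_iff_ne_zero.mpr (neg_ne_zero.mpr hm)).map _)

theorem quadratic_card_filter_adj_nonneg_of_isClique
    (hspec : IsLeast (spectrum ℝ (G.adjMatrix ℝ)) (-m)) (hC : G.IsClique (C : Set V))
    (hy : y ∉ C) (hz : ∃ z ∈ C, ¬G.Adj y z) {a c : ℕ} (ha : #{u ∈ C | G.Adj y u} = a)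
    (hc : #C = c) :
    0 ≤ (a : ℝ) ^ 2 - (c + m - 1) * a + m * (m - 1) * (c + m - 1) := by
  have hB := (G.isHermitian_adjMatrix ℝ).posSemidef_add_smul_one hspec.2
  obtain ⟨z, hzC, hyz⟩ := hz
  set t := #{u ∈ C | ¬G.Adj y u} with ht
  have hat : (a : ℝ) + t = c := by
    rw [← ha, ← hc]
    exact_mod_cast card_filter_add_card_filter_not (G.Adj y)
  have ht1 : (1 : ℝ) ≤ t := by
    exact_mod_cast card_pos.mpr ⟨z, mem_filter.mpr ⟨hzC, hyz⟩⟩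
  rcases Nat.eq_zero_or_pos a with rfl | ha1
  · rcases eq_zero_or_one_le_of_isLeast_spectrum_adjMatrix hspec with rfl | hm
    · simp
    · have : 0 ≤ m * (m - 1) * (c + m - 1) := by
        apply mul_nonneg (mul_nonneg _ _) <;> linarith
      simpa using this
  · obtain ⟨x₀, hx₀⟩ := card_pos.mp (ha ▸ ha1)
    have hm := one_le_of_adj hB (mem_filter.mp hx₀).2
    -- the first row of the adjugate of the quotient matrix, divided by `t`
    have h := quotient_form_nonneg_of_isClique hB hC hy ha ht.symm
      (m * (t + m - 1)) (-(a * m)) (-(a * (t + m - 1)))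
    rw [← hat]
    refine nonneg_of_mul_nonneg_right (a := a * m * (t + m - 1)) ?_
      (mul_pos (mul_pos (Nat.cast_pos.mpr ha1) (by linarith)) (by linarith))
    linear_combination h

theorem card_filter_adj_le_card_inter_of_isClique (hC : G.IsClique (C : Set V)) {z : V}
    (hzC : z ∈ C) (hyz : ¬G.Adj y z) :
    #{u ∈ C | G.Adj y u} ≤ #(G.neighborFinset y ∩ G.neighborFinset z) := by
  refine card_le_card fun u hu => ?_
  obtain ⟨huC, hyu⟩ := mem_filter.mp hu
  have hzu : z ≠ u := fun h => hyz (h ▸ hyu)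
  simpa [hyu] using hC hzC huC hzu

end SimpleGraph

theorem maximal_clique_partial_adjacency_bound_general {V : Type*} [Fintype V] [DecidableEq V]
    (G : SimpleGraph V) [DecidableRel G.Adj] (m : ℝ) (μ : ℕ)
    (hspec : IsLeast (spectrum ℝ (G.adjMatrix ℝ)) (-m))
    (hμ : ∀ u v : V, u ≠ v → ¬G.Adj u v →
      (G.neighborFinset u ∩ G.neighborFinset v).card ≤ μ)
    (C : Finset V) (hclique : G.IsClique (C : Set V))
    (hmax : ∀ y ∉ C, ∃ z ∈ C, ¬G.Adj y z)
    (c : ℕ) (hc : C.card = c)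
    (y : V) (hy : y ∉ C) (a : ℕ) (ha : (C.filter (fun z => G.Adj y z)).card = a)
    (hμsmall : (μ : ℝ) <
      ((c : ℝ) + m - 1 +
        Real.sqrt (((c : ℝ) + m - 1) * ((c : ℝ) - (m - 1) * (4 * m - 1)))) / 2) :
    (a : ℝ) ≤
      ((c : ℝ) + m - 1 -
        Real.sqrt (((c : ℝ) + m - 1) * ((c : ℝ) - (m - 1) * (4 * m - 1)))) / 2 := by
  obtain ⟨z, hzC, hyz⟩ := hmax y hy
  have hquad := SimpleGraph.quadratic_card_filter_adj_nonneg_of_isClique hspec hclique hy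
    ⟨z, hzC, hyz⟩ ha hc
  have haμ : a ≤ μ :=
    ha ▸ (SimpleGraph.card_filter_adj_le_card_inter_of_isClique hclique hzC hyz).trans
      (hμ y z (fun h => hy (h ▸ hzC)) hyz)
  have hdisc : ((c : ℝ) + m - 1) * ((c : ℝ) - (m - 1) * (4 * m - 1)) =
      ((c : ℝ) + m - 1) ^ 2 - 4 * (m * (m - 1) * (c + m - 1)) := by ring
  rw [hdisc] at hμsmall ⊢
  exact le_of_sq_sub_mul_add_nonneg_of_lt hquad (lt_of_le_of_lt (by exact_mod_cast haμ) hμsmall)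

/-- Lemma 3.2: let `Γ` have smallest adjacency eigenvalue `-m`, with any two distinct
non-adjacent vertices having at most `μ` common neighbors. If `Γ` has a maximal clique `C`
of order `c ≥ (m-1)(4m-1)` and a vertex `y ∉ C` with `a` neighbors in `C`, and
`μ < (c+m-1+√D)/2` where `D = (c+m-1)(c-(m-1)(4m-1))`, then `a ≤ (c+m-1-√D)/2`. -/
theorem maximal_clique_partial_adjacency_bound {V : Type*} [Fintype V] [DecidableEq V]
    (G : SimpleGraph V) [DecidableRel G.Adj] (m : ℝ) (μ : ℕ)
    (hspec : IsLeast (spectrum ℝ (G.adjMatrix ℝ)) (-m))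
    (hμ : ∀ u v : V, u ≠ v → ¬G.Adj u v →
      (G.neighborFinset u ∩ G.neighborFinset v).card ≤ μ)
    (C : Finset V) (hclique : G.IsClique (C : Set V))
    (hmax : ∀ y ∉ C, ∃ z ∈ C, ¬G.Adj y z)
    (c : ℕ) (hc : C.card = c) (hcm : (m - 1) * (4 * m - 1) ≤ (c : ℝ))
    (y : V) (hy : y ∉ C) (a : ℕ) (ha : (C.filter (fun z => G.Adj y z)).card = a)
    (hμsmall : (μ : ℝ) <
      ((c : ℝ) + m - 1 +
        Real.sqrt (((c : ℝ) + m - 1) * ((c : ℝ) - (m - 1) * (4 * m - 1)))) / 2) :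
    (a : ℝ) ≤
      ((c : ℝ) + m - 1 -
        Real.sqrt (((c : ℝ) + m - 1) * ((c : ℝ) - (m - 1) * (4 * m - 1)))) / 2 :=
  maximal_clique_partial_adjacency_bound_general G m μ hspec hμ C hclique hmax c hc y hy a ha
    hμsmall
end

section
/- Let Γ be an edge-regular graph with parameters (v, k, λ) containing a clique C of order c, let x ∈ C, and suppose every vertex in Γ(x)∖C has at most n neighbors in C∖{x}. Then (c-1)(λ-(c-2)) ≤ n(k-(c-1)), i.e., (c-1)(λ-c+2)/(k-c+1) ≤ n when k > c-1. -/
/-!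
Double count the edges between `C.erase x` and `Γ(x) \ C`. A vertex `z ∈ C.erase x` is adjacent
to `x`, so it has `λ` common neighbours with `x`, of which exactly `c - 2` lie in the clique; the
other `λ - (c - 2)` are its neighbours in `Γ(x) \ C`. The `k - (c - 1)` vertices of `Γ(x) \ C`
each receive at most `n` of these edges. Working in `ℤ` avoids truncated subtraction and makes
the case `c = 1` need no separate treatment.
-/

open Finset

namespace SimpleGraph

variable {V : Type*} [DecidableEq V] {G : SimpleGraph V} [G.LocallyFinite] {C : Finset V} {x y : V}

theorem IsClique.neighborFinset_inter (hC : G.IsClique (C : Set V)) (hx : x ∈ C) :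
    G.neighborFinset x ∩ C = C.erase x := by
  ext z
  simp only [mem_inter, mem_erase, mem_neighborFinset]
  exact ⟨fun ⟨hxz, hz⟩ => ⟨hxz.ne', hz⟩, fun ⟨hzx, hz⟩ => ⟨hC hx hz hzx.symm, hz⟩⟩

theorem IsClique.commonNeighbors_inter (hC : G.IsClique (C : Set V)) (hx : x ∈ C) (hy : y ∈ C) :
    G.neighborFinset x ∩ G.neighborFinset y ∩ C = (C.erase x).erase y := by
  rw [inter_inter_distrib_right, hC.neighborFinset_inter hx, hC.neighborFinset_inter hy,
    erase_inter, inter_erase, inter_self, erase_right_comm]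

theorem IsClique.card_neighborFinset_sdiff (hC : G.IsClique (C : Set V)) (hx : x ∈ C) :
    (#(G.neighborFinset x \ C) : ℤ) = G.degree x - (#C - 1) := by
  have h := card_sdiff_add_card_inter (G.neighborFinset x) C
  rw [hC.neighborFinset_inter hx, card_neighborFinset_eq_degree] at h
  rw [← h, Nat.cast_add, cast_card_erase_of_mem hx]
  ring

theorem IsClique.card_commonNeighbors_sdiff (hC : G.IsClique (C : Set V)) (hx : x ∈ C)
    (hy : y ∈ C) (hxy : x ≠ y) :
    (#((G.neighborFinset x ∩ G.neighborFinset y) \ C) : ℤ) =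
      #(G.neighborFinset x ∩ G.neighborFinset y) - (#C - 2) := by
  have h := card_sdiff_add_card_inter (G.neighborFinset x ∩ G.neighborFinset y) C
  rw [hC.commonNeighbors_inter hx hy] at h
  rw [← h, Nat.cast_add, cast_card_erase_of_mem (mem_erase.2 ⟨hxy.symm, hy⟩),
    cast_card_erase_of_mem hx]
  ring

theorem filter_adj_neighborFinset_sdiff [DecidableRel G.Adj] :
    {z ∈ G.neighborFinset x \ C | G.Adj y z} =
      (G.neighborFinset x ∩ G.neighborFinset y) \ C := by
  ext z
  simp only [mem_filter, mem_sdiff, mem_inter, mem_neighborFinset]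
  tauto

end SimpleGraph

theorem edge_regular_clique_edge_count_general {V : Type*} [Fintype V] [DecidableEq V]
    (G : SimpleGraph V) [DecidableRel G.Adj] (k lam : ℕ)
    (hreg : G.IsRegularOfDegree k)
    (hlam : ∀ u w : V, G.Adj u w → (G.neighborFinset u ∩ G.neighborFinset w).card = lam)
    (C : Finset V) (hclique : G.IsClique (C : Set V)) (c : ℕ) (hc : C.card = c)
    (x : V) (hx : x ∈ C) (n : ℕ)
    (hn : ∀ y ∈ G.neighborFinset x \ C,
      (((C.erase x).filter (fun z => G.Adj y z)).card ≤ n)) :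
    ((c : ℤ) - 1) * ((lam : ℤ) - ((c : ℤ) - 2)) ≤ (n : ℤ) * ((k : ℤ) - ((c : ℤ) - 1)) := by
  subst hc
  have hcount := card_nsmul_le_card_nsmul (s := C.erase x) (t := G.neighborFinset x \ C)
    (r := G.Adj) (m := (lam : ℤ) - (#C - 2)) (n := (n : ℤ)) ?_ ?_
  · rw [nsmul_eq_mul, nsmul_eq_mul, cast_card_erase_of_mem hx,
      hclique.card_neighborFinset_sdiff hx, hreg x] at hcount
    linarith
  · intro z hz
    obtain ⟨hzx, hzC⟩ := mem_erase.1 hz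
    have hxz : G.Adj x z := hclique hx hzC hzx.symm
    rw [bipartiteAbove, SimpleGraph.filter_adj_neighborFinset_sdiff,
      hclique.card_commonNeighbors_sdiff hx hzC hxz.ne, hlam x z hxz]
  · intro y hy
    simp_rw [bipartiteBelow, G.adj_comm _ y]
    exact_mod_cast hn y hy

/-- Lemma 3.4: in an edge-regular graph with parameters `(v, k, λ)` containing a clique `C`
of order `c`, if `x ∈ C` and every vertex of `Γ(x) ∖ C` has at most `n` neighbors in
`C ∖ {x}`, then `(c-1)(λ-(c-2)) ≤ n(k-(c-1))`. -/
theorem edge_regular_clique_edge_count {V : Type*} [Fintype V] [DecidableEq V]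
    (G : SimpleGraph V) [DecidableRel G.Adj] (v k lam : ℕ)
    (hv : Fintype.card V = v)
    (hreg : G.IsRegularOfDegree k)
    (hlam : ∀ u w : V, G.Adj u w → (G.neighborFinset u ∩ G.neighborFinset w).card = lam)
    (C : Finset V) (hclique : G.IsClique (C : Set V)) (c : ℕ) (hc : C.card = c)
    (x : V) (hx : x ∈ C) (n : ℕ)
    (hn : ∀ y ∈ G.neighborFinset x \ C,
      (((C.erase x).filter (fun z => G.Adj y z)).card ≤ n)) :
    ((c : ℤ) - 1) * ((lam : ℤ) - ((c : ℤ) - 2)) ≤ (n : ℤ) * ((k : ℤ) - ((c : ℤ) - 1)) :=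
  edge_regular_clique_edge_count_general G k lam hreg hlam C hclique c hc x hx n hn
end

section
/- Let Γ be an amply regular graph with parameters (v, k, λ, μ) containing a maximal clique C of order c with 2 ≤ c and c - 1 < k. Then (c-1)(λ-(c-2)) ≤ (μ-1)(k-(c-1)). -/
/-!
Fix `x ∈ C` and count the edges between `C ∖ {x}` and `N = Γ(x) ∖ C`. Each `z ∈ C ∖ {x}` has
`λ - (c - 2)` neighbours in `N`, since the other common neighbours of `x` and `z` are the remaining
`c - 2` vertices of `C`. By maximality each `y ∈ N` misses some `z ∈ C`; then `x` is a common
neighbour of `y` and `z`, so `y` and `z` have exactly `μ` common neighbours, among them `x` and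
every neighbour of `y` in `C`. Hence `y` has at most `μ - 1` neighbours in `C ∖ {x}`, and
`|N| = k - (c - 1)` finishes the double count.
-/

open Finset

namespace SimpleGraph

variable {V : Type*} [Fintype V] [DecidableEq V] {G : SimpleGraph V} [DecidableRel G.Adj]
  {C : Finset V} {x y z : V}

theorem IsClique.erase_subset_neighborFinset (hC : G.IsClique (C : Set V)) (hx : x ∈ C) :
    C.erase x ⊆ G.neighborFinset x := fun w hw =>
  (G.mem_neighborFinset x w).2 <| hC hx (mem_of_mem_erase hw) (ne_of_mem_erase hw).symm

theorem IsClique.card_neighborFinset_sdiff_add_card (hC : G.IsClique (C : Set V)) (hx : x ∈ C) :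
    #(G.neighborFinset x \ C) + #C = G.degree x + 1 := by
  have hsdiff : G.neighborFinset x \ C = G.neighborFinset x \ C.erase x := by
    ext w
    simp only [mem_sdiff, mem_erase, mem_neighborFinset]
    exact ⟨fun ⟨hw, hwC⟩ => ⟨hw, hwC ∘ And.right⟩,
      fun ⟨hw, hwC⟩ => ⟨hw, fun h => hwC ⟨hw.ne.symm, h⟩⟩⟩
  rw [hsdiff, ← card_erase_add_one hx, ← add_assoc,
    card_sdiff_add_card_eq_card (hC.erase_subset_neighborFinset hx), card_neighborFinset_eq_degree]

theorem IsClique.card_filter_adj_sdiff_add_card (hC : G.IsClique (C : Set V)) (hx : x ∈ C)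
    (hz : z ∈ C) (hxz : x ≠ z) :
    #((G.neighborFinset x \ C).filter (G.Adj z)) + #C =
      #(G.neighborFinset x ∩ G.neighborFinset z) + 2 := by
  have hsplit : G.neighborFinset x ∩ G.neighborFinset z =
      (G.neighborFinset x \ C).filter (G.Adj z) ∪ (C.erase x).erase z := by
    ext w
    simp only [mem_inter, mem_union, mem_filter, mem_sdiff, mem_erase, mem_neighborFinset]
    constructor
    · rintro ⟨hxw, hzw⟩
      by_cases hw : w ∈ C
      · exact Or.inr ⟨hzw.ne.symm, hxw.ne.symm, hw⟩
      · exact Or.inl ⟨⟨hxw, hw⟩, hzw⟩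
    · rintro (⟨⟨hxw, -⟩, hzw⟩ | ⟨hwz, hwx, hw⟩)
      · exact ⟨hxw, hzw⟩
      · exact ⟨hC hx hw hwx.symm, hC hz hw hwz.symm⟩
  have hdisj : Disjoint ((G.neighborFinset x \ C).filter (G.Adj z)) ((C.erase x).erase z) :=
    Finset.disjoint_left.2 fun _ hw hw' =>
      (mem_sdiff.1 (mem_filter.1 hw).1).2 (mem_of_mem_erase (mem_of_mem_erase hw'))
  have hcard : #((C.erase x).erase z) + 2 = #C := by
    rw [← card_erase_add_one hx, ← card_erase_add_one (mem_erase.2 ⟨hxz.symm, hz⟩)]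
  rw [hsplit, card_union_of_disjoint hdisj, ← hcard]
  ring

theorem IsClique.card_filter_adj_le (hC : G.IsClique (C : Set V)) (hz : z ∈ C)
    (hyz : ¬G.Adj y z) :
    #(C.filter (G.Adj · y)) ≤ #(G.neighborFinset y ∩ G.neighborFinset z) := by
  refine card_le_card fun w hw => ?_
  obtain ⟨hw, hwy⟩ := mem_filter.1 hw
  have hwz : w ≠ z := by rintro rfl; exact hyz hwy.symm
  simpa only [mem_inter, mem_neighborFinset] using ⟨hwy.symm, hC hz hw hwz.symm⟩

theorem IsClique.card_filter_adj_erase_add_one_le {μ : ℕ} (hC : G.IsClique (C : Set V))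
    (hmax : ∀ y ∉ C, ∃ z ∈ C, ¬G.Adj y z)
    (hμ : ∀ u w : V, u ≠ w → ¬G.Adj u w → (G.neighborFinset u ∩ G.neighborFinset w).Nonempty →
      #(G.neighborFinset u ∩ G.neighborFinset w) = μ)
    (hx : x ∈ C) (hy : y ∈ G.neighborFinset x \ C) :
    #((C.erase x).filter (G.Adj · y)) + 1 ≤ μ := by
  obtain ⟨hxy, hyC⟩ := mem_sdiff.1 hy
  rw [mem_neighborFinset] at hxy
  obtain ⟨z, hz, hyz⟩ := hmax y hyC
  have hxz : G.Adj x z := hC hx hz (by rintro rfl; exact hyz hxy.symm)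
  have hcommon : x ∈ G.neighborFinset y ∩ G.neighborFinset z := by
    simpa only [mem_inter, mem_neighborFinset] using ⟨hxy.symm, hxz.symm⟩
  rw [filter_erase, card_erase_add_one (mem_filter.2 ⟨hx, hxy⟩),
    ← hμ y z (by rintro rfl; exact hyC hz) hyz ⟨x, hcommon⟩]
  exact hC.card_filter_adj_le hz hyz

end SimpleGraph

theorem amply_regular_maximal_clique_bound_general {V : Type*} [Fintype V] [DecidableEq V]
    (G : SimpleGraph V) [DecidableRel G.Adj] (k lam μ : ℕ)
    (hreg : G.IsRegularOfDegree k)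
    (hlam : ∀ u w : V, G.Adj u w → (G.neighborFinset u ∩ G.neighborFinset w).card = lam)
    (hμ : ∀ u w : V, u ≠ w → ¬G.Adj u w → (G.neighborFinset u ∩ G.neighborFinset w).Nonempty →
      (G.neighborFinset u ∩ G.neighborFinset w).card = μ)
    (C : Finset V) (hclique : G.IsClique (C : Set V))
    (hmax : ∀ y ∉ C, ∃ z ∈ C, ¬G.Adj y z)
    (c : ℕ) (hc : C.card = c) (hc2 : 2 ≤ c) :
    ((c : ℤ) - 1) * ((lam : ℤ) - ((c : ℤ) - 2)) ≤
      ((μ : ℤ) - 1) * ((k : ℤ) - ((c : ℤ) - 1)) := by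
  obtain ⟨x, hx⟩ : C.Nonempty := card_pos.1 (by omega)
  have hN := hclique.card_neighborFinset_sdiff_add_card hx
  rw [hreg x, hc] at hN
  have hout (z : V) (hz : z ∈ C.erase x) :
      (#((G.neighborFinset x \ C).filter (G.Adj z)) : ℤ) = lam - (c - 2) := by
    have hxz := (ne_of_mem_erase hz).symm
    have := hclique.card_filter_adj_sdiff_add_card hx (mem_of_mem_erase hz) hxz
    rw [hc, hlam x z (hclique hx (mem_of_mem_erase hz) hxz)] at this
    omega
  calc ((c : ℤ) - 1) * (lam - (c - 2))
      = ∑ z ∈ C.erase x, (#((G.neighborFinset x \ C).filter (G.Adj z)) : ℤ) := by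
        rw [sum_congr rfl hout, sum_const, card_erase_of_mem hx, hc, nsmul_eq_mul]
        push_cast [show 1 ≤ c by omega]
        ring
    _ = ∑ y ∈ G.neighborFinset x \ C, (#((C.erase x).filter (G.Adj · y)) : ℤ) := by
        exact_mod_cast sum_card_bipartiteAbove_eq_sum_card_bipartiteBelow G.Adj
    _ ≤ ∑ _y ∈ G.neighborFinset x \ C, ((μ : ℤ) - 1) := sum_le_sum fun y hy => by
        have := hclique.card_filter_adj_erase_add_one_le hmax hμ hx hy
        omega
    _ = (μ - 1) * (k - (c - 1)) := by
        rw [sum_const, nsmul_eq_mul, mul_comm]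
        congr 1
        omega

/-- Corollary 3.5: in an amply regular graph with parameters `(v, k, λ, μ)` containing a
maximal clique `C` of order `c` with `2 ≤ c` and `c - 1 < k`, one has
`(c-1)(λ-(c-2)) ≤ (μ-1)(k-(c-1))`. -/
theorem amply_regular_maximal_clique_bound {V : Type*} [Fintype V] [DecidableEq V]
    (G : SimpleGraph V) [DecidableRel G.Adj] (v k lam μ : ℕ)
    (hv : Fintype.card V = v)
    (hreg : G.IsRegularOfDegree k)
    (hlam : ∀ u w : V, G.Adj u w → (G.neighborFinset u ∩ G.neighborFinset w).card = lam)
    (hμ : ∀ u w : V, u ≠ w → ¬G.Adj u w → (G.neighborFinset u ∩ G.neighborFinset w).Nonempty →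
      (G.neighborFinset u ∩ G.neighborFinset w).card = μ)
    (C : Finset V) (hclique : G.IsClique (C : Set V))
    (hmax : ∀ y ∉ C, ∃ z ∈ C, ¬G.Adj y z)
    (c : ℕ) (hc : C.card = c) (hc2 : 2 ≤ c) (hck : c - 1 < k) :
    ((c : ℤ) - 1) * ((lam : ℤ) - ((c : ℤ) - 2)) ≤
      ((μ : ℤ) - 1) * ((k : ℤ) - ((c : ℤ) - 1)) :=
  amply_regular_maximal_clique_bound_general G k lam μ hreg hlam hμ C hclique hmax c hc hc2
end

section
/- Let Γ be an amply regular graph with parameters (v,k,λ,μ), let x be a vertex and let C̄ be a coclique of order c̄ ≥ 2 contained in Γ(x). Then binom(c̄,2)·(μ-1) ≥ c̄·(λ+1) - k (the claw-bound). -/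
/-!
For `y ∈ C̄` let `L y` be the closed neighbourhood of `y` in the local graph `Γ(x)`, i.e.
`{y} ∪ (Γ(y) ∩ Γ(x))`. These are `c̄` subsets of `Γ(x)` of size `λ + 1`, and two of them
meet only in common neighbours of two non-adjacent vertices other than `x`, so in at most
`μ - 1` points. The Bonferroni inequality `∑ |L y| ≤ |⋃ L y| + ∑_{{y,z}} |L y ∩ L z|` then
gives `c̄ (λ + 1) ≤ k + binom(c̄, 2) (μ - 1)`.
-/

open Finset

theorem sum_card_le_card_biUnion_add_choose_two_mul {ι α : Type*} [DecidableEq ι]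
    [DecidableEq α] (I : Finset ι) (s : ι → Finset α) {m : ℕ}
    (h : ∀ i ∈ I, ∀ j ∈ I, i ≠ j → #(s i ∩ s j) ≤ m) :
    ∑ i ∈ I, #(s i) ≤ #(I.biUnion s) + (#I).choose 2 * m := by
  induction I using Finset.induction_on with
  | empty => simp
  | insert a I ha ih =>
    have hI : ∀ i ∈ I, ∀ j ∈ I, i ≠ j → #(s i ∩ s j) ≤ m := fun i hi j hj =>
      h i (mem_insert_of_mem hi) j (mem_insert_of_mem hj)
    have hnew : #(s a ∩ I.biUnion s) ≤ #I * m := by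
      rw [inter_biUnion]
      calc #(I.biUnion fun j => s a ∩ s j) ≤ ∑ j ∈ I, #(s a ∩ s j) := card_biUnion_le
        _ ≤ ∑ _j ∈ I, m := sum_le_sum fun j hj =>
            h a (mem_insert_self a I) j (mem_insert_of_mem hj) (ne_of_mem_of_not_mem hj ha).symm
        _ = #I * m := by rw [sum_const, smul_eq_mul]
    have hunion := card_union_add_card_inter (s a) (I.biUnion s)
    rw [sum_insert ha, biUnion_insert, card_insert_of_notMem ha, Nat.choose_succ_succ',
      Nat.choose_one_right]
    nlinarith [ih hI]

namespace SimpleGraph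

variable {V : Type*} [DecidableEq V] (G : SimpleGraph V) [Fintype V] [DecidableRel G.Adj]

def localClosedNeighborFinset (x y : V) : Finset V :=
  insert y (G.neighborFinset y ∩ G.neighborFinset x)

variable {G} {x y z : V}

theorem localClosedNeighborFinset_subset (hxy : G.Adj x y) :
    G.localClosedNeighborFinset x y ⊆ G.neighborFinset x :=
  insert_subset ((G.mem_neighborFinset x y).2 hxy) inter_subset_right

theorem card_localClosedNeighborFinset (x y : V) :
    #(G.localClosedNeighborFinset x y) = #(G.neighborFinset y ∩ G.neighborFinset x) + 1 :=
  card_insert_of_notMem fun h =>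
    G.loopless.irrefl y ((G.mem_neighborFinset y y).1 (mem_inter.1 h).1)

theorem localClosedNeighborFinset_inter_subset (hyz : y ≠ z) (hnadj : ¬G.Adj y z) :
    G.localClosedNeighborFinset x y ∩ G.localClosedNeighborFinset x z ⊆
      (G.neighborFinset y ∩ G.neighborFinset z).erase x := by
  intro w hw
  simp only [localClosedNeighborFinset, mem_inter, mem_insert, mem_erase,
    mem_neighborFinset] at hw ⊢
  obtain ⟨rfl | ⟨hyw, hxw⟩, rfl | ⟨hzw, -⟩⟩ := hw
  · exact absurd rfl hyz
  · exact absurd hzw.symm hnadj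
  · exact absurd hyw hnadj
  · exact ⟨fun hwx => G.loopless.irrefl x (hwx ▸ hxw), hyw, hzw⟩

theorem mem_neighborFinset_inter_of_adj (hxy : G.Adj x y) (hxz : G.Adj x z) :
    x ∈ G.neighborFinset y ∩ G.neighborFinset z := by
  simp [hxy.symm, hxz.symm]

theorem card_mul_succ_le_add_choose_two_mul {k lam μ : ℕ} (hreg : G.IsRegularOfDegree k)
    (hlam : ∀ u w : V, G.Adj u w → #(G.neighborFinset u ∩ G.neighborFinset w) = lam)
    (hμ : ∀ u w : V, u ≠ w → ¬G.Adj u w → (G.neighborFinset u ∩ G.neighborFinset w).Nonempty →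
      #(G.neighborFinset u ∩ G.neighborFinset w) = μ)
    {C : Finset V} (hsub : C ⊆ G.neighborFinset x)
    (hindep : (C : Set V).Pairwise fun u w => ¬G.Adj u w) :
    #C * (lam + 1) ≤ k + (#C).choose 2 * (μ - 1) := by
  have hadj : ∀ y ∈ C, G.Adj x y := fun y hy => (G.mem_neighborFinset x y).1 (hsub hy)
  calc #C * (lam + 1) = ∑ y ∈ C, #(G.localClosedNeighborFinset x y) := by
        rw [sum_congr rfl fun y hy => by
          rw [card_localClosedNeighborFinset, hlam y x (hadj y hy).symm], sum_const, smul_eq_mul]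
    _ ≤ #(C.biUnion (G.localClosedNeighborFinset x)) + (#C).choose 2 * (μ - 1) := by
        refine sum_card_le_card_biUnion_add_choose_two_mul _ _ fun y hy z hz hyz => ?_
        have hx := mem_neighborFinset_inter_of_adj (hadj y hy) (hadj z hz)
        calc _ ≤ _ := card_le_card (localClosedNeighborFinset_inter_subset hyz (hindep hy hz hyz))
          _ = μ - 1 := by rw [card_erase_of_mem hx, hμ y z hyz (hindep hy hz hyz) ⟨x, hx⟩]
    _ ≤ k + (#C).choose 2 * (μ - 1) := by
        gcongr
        rw [← hreg x, ← card_neighborFinset_eq_degree]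
        exact card_le_card <|
          biUnion_subset.2 fun y hy => localClosedNeighborFinset_subset (hadj y hy)

end SimpleGraph

open SimpleGraph in
theorem claw_bound_general {V : Type*} [Fintype V] [DecidableEq V]
    (G : SimpleGraph V) [DecidableRel G.Adj] (k lam μ : ℕ)
    (hreg : G.IsRegularOfDegree k)
    (hlam : ∀ u w : V, G.Adj u w → (G.neighborFinset u ∩ G.neighborFinset w).card = lam)
    (hμ : ∀ u w : V, u ≠ w → ¬G.Adj u w → (G.neighborFinset u ∩ G.neighborFinset w).Nonempty →
      (G.neighborFinset u ∩ G.neighborFinset w).card = μ)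
    (x : V) (Cbar : Finset V) (hsub : Cbar ⊆ G.neighborFinset x)
    (hindep : (Cbar : Set V).Pairwise fun u w => ¬G.Adj u w)
    (cbar : ℕ) (hcbar : Cbar.card = cbar) (h2 : 2 ≤ cbar) :
    ((cbar : ℤ) * ((cbar : ℤ) - 1) / 2) * ((μ : ℤ) - 1) ≥
      (cbar : ℤ) * ((lam : ℤ) + 1) - (k : ℤ) := by
  have hμ_pos : 1 ≤ μ := by
    obtain ⟨y, hy, z, hz, hyz⟩ := one_lt_card.1 (hcbar ▸ h2 : 1 < #Cbar)
    have hx := mem_neighborFinset_inter_of_adj ((G.mem_neighborFinset x y).1 (hsub hy))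
      ((G.mem_neighborFinset x z).1 (hsub hz))
    rw [← hμ y z hyz (hindep hy hz hyz) ⟨x, hx⟩]
    exact card_pos.2 ⟨x, hx⟩
  have hbound := card_mul_succ_le_add_choose_two_mul hreg hlam hμ hsub hindep
  have hchoose : ((cbar.choose 2 : ℕ) : ℤ) = (cbar : ℤ) * ((cbar : ℤ) - 1) / 2 := by
    rw [Nat.choose_two_right, Int.natCast_ediv]
    push_cast [Nat.cast_sub (by omega : 1 ≤ cbar)]
    rfl
  rw [← hchoose, ← hcbar]
  zify [hμ_pos] at hbound
  linarith

/-- The claw-bound (Lemma 4.1): in an amply regular graph with parameters `(v,k,λ,μ)`, if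
`C̄` is a coclique of order `c̄ ≥ 2` contained in the neighborhood of a vertex `x`, then
`binom(c̄,2)·(μ-1) ≥ c̄·(λ+1) - k`. -/
theorem claw_bound {V : Type*} [Fintype V] [DecidableEq V]
    (G : SimpleGraph V) [DecidableRel G.Adj] (v k lam μ : ℕ)
    (hv : Fintype.card V = v)
    (hreg : G.IsRegularOfDegree k)
    (hlam : ∀ u w : V, G.Adj u w → (G.neighborFinset u ∩ G.neighborFinset w).card = lam)
    (hμ : ∀ u w : V, u ≠ w → ¬G.Adj u w → (G.neighborFinset u ∩ G.neighborFinset w).Nonempty →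
      (G.neighborFinset u ∩ G.neighborFinset w).card = μ)
    (x : V) (Cbar : Finset V) (hsub : Cbar ⊆ G.neighborFinset x)
    (hindep : (Cbar : Set V).Pairwise fun u w => ¬G.Adj u w)
    (cbar : ℕ) (hcbar : Cbar.card = cbar) (h2 : 2 ≤ cbar) :
    ((cbar : ℤ) * ((cbar : ℤ) - 1) / 2) * ((μ : ℤ) - 1) ≥
      (cbar : ℤ) * ((lam : ℤ) + 1) - (k : ℤ) :=
  claw_bound_general G k lam μ hreg hlam hμ x Cbar hsub hindep cbar hcbar h2
end

section
/- Let Γ be a strongly regular graph with parameters (v,k,λ,μ) and smallest eigenvalue -m (m ≥ 1 an integer), and suppose C is a Delsarte clique of order 1 + k/m. Then every vertex outside C has exactly μ/m neighbors in C. -/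
/-!
Let `A` be the adjacency matrix, `χ` the indicator vector of `C` and `θ ≠ k` an eigenvalue with
`-θ (|C| - 1) = k`. The defect vector `d = -θ A χ - (k - μ) χ - μ 𝟙` has coordinate
`-θ |N(x) ∩ C| - μ` at `x ∉ C` and vanishes on `C`. Applying `A² = k I + λ A + μ (J - I - A)` to a
`θ`-eigenvector gives `θ² = k + λ θ - μ (1 + θ)`, and with it and `-θ (|C| - 1) = k` the same
identity yields `A d = θ d`. Then `d ⊥ 𝟙` since `θ ≠ k`, `d ⊥ χ` since `d` vanishes on `C`, and
`⟨d, A χ⟩ = ⟨A d, χ⟩ = θ ⟨d, χ⟩ = 0`; as `d` is a combination of these three vectors, `⟨d, d⟩ = 0`.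
-/

open Finset Matrix

theorem Matrix.exists_mulVec_eq_smul_of_mem_spectrum {n K : Type*} [Fintype n] [DecidableEq n]
    [Field K] {A : Matrix n n K} {θ : K} (h : θ ∈ spectrum K A) : ∃ u ≠ 0, A *ᵥ u = θ • u := by
  rw [← spectrum_toLin', ← Module.End.hasEigenvalue_iff_mem_spectrum] at h
  obtain ⟨u, hu⟩ := h.exists_hasEigenvector
  exact ⟨u, hu.2, by simpa using hu.apply_eq_smul⟩

namespace SimpleGraph

variable {V α : Type*} {G : SimpleGraph V} [DecidableRel G.Adj]

theorem compl_adjMatrix_eq [DecidableEq V] [AddGroupWithOne α] :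
    Gᶜ.adjMatrix α = of 1 - 1 - G.adjMatrix α := by
  ext i j
  by_cases hij : i = j
  · subst hij; simp
  · by_cases h : G.Adj i j <;> simp [adjMatrix_apply, hij, h, one_apply]

theorem IsClique.card_filter_adj_add_one [DecidableEq V] {C : Finset V}
    (hC : G.IsClique (C : Set V)) {x : V} (hx : x ∈ C) : #{z ∈ C | G.Adj x z} + 1 = #C := by
  rw [← Finset.card_erase_add_one hx]
  congr 2
  ext z
  simp only [Finset.mem_filter, Finset.mem_erase]
  exact ⟨fun ⟨hz, hxz⟩ => ⟨hxz.ne', hz⟩, fun ⟨hzx, hz⟩ => ⟨hz, hC hx hz (Ne.symm hzx)⟩⟩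

variable [Fintype V]

theorem adjMatrix_mulVec_indicator_apply [NonAssocSemiring α] (s : Finset V) (x : V) :
    (G.adjMatrix α *ᵥ (s : Set V).indicator 1) x = #{z ∈ s | G.Adj x z} := by
  classical
  simp only [adjMatrix_mulVec_apply, Set.indicator_apply, Finset.mem_coe, Pi.one_apply,
    Finset.sum_boole]
  congr 2
  ext z
  simp [and_comm]

theorem IsRegularOfDegree.adjMatrix_mulVec_one [NonAssocSemiring α] {k : ℕ}
    (hG : G.IsRegularOfDegree k) : G.adjMatrix α *ᵥ 1 = (k : α) • 1 := by
  ext x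
  simp [hG x]

theorem IsRegularOfDegree.sum_eq_zero_of_adjMatrix_mulVec_eq_smul [Field α] {k : ℕ} {θ : α}
    {f : V → α} (hG : G.IsRegularOfDegree k) (hθ : θ ≠ k) (hf : G.adjMatrix α *ᵥ f = θ • f) :
    ∑ x, f x = 0 := by
  have h : θ * ∑ x, f x = k * ∑ x, f x := calc
    θ * ∑ x, f x = 1 ⬝ᵥ G.adjMatrix α *ᵥ f := by simp [hf, one_dotProduct, Finset.mul_sum]
    _ = (1 ᵥ* G.adjMatrix α) ⬝ᵥ f := dotProduct_mulVec _ _ _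
    _ = k * ∑ x, f x := by
      simp [dotProduct, adjMatrix_vecMul_apply, hG _, Finset.mul_sum]
  exact (mul_eq_mul_right_iff.mp h).resolve_left hθ

theorem compl_adjMatrix_mulVec [DecidableEq V] [Ring α] (f : V → α) :
    Gᶜ.adjMatrix α *ᵥ f = (∑ x, f x) • 1 - f - G.adjMatrix α *ᵥ f := by
  rw [compl_adjMatrix_eq, sub_mulVec, sub_mulVec, one_mulVec]
  ext x
  simp [mulVec, dotProduct]

variable {n k ℓ μ : ℕ}

theorem IsSRGWith.adjMatrix_mulVec_mulVec [DecidableEq V] [CommRing α] (h : G.IsSRGWith n k ℓ μ)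
    (f : V → α) :
    G.adjMatrix α *ᵥ (G.adjMatrix α *ᵥ f) = (k : α) • f + (ℓ : α) • G.adjMatrix α *ᵥ f
      + (μ : α) • ((∑ x, f x) • 1 - f - G.adjMatrix α *ᵥ f) := by
  rw [mulVec_mulVec, ← sq, h.matrix_eq, add_mulVec, add_mulVec, ← compl_adjMatrix_mulVec]
  simp [← Nat.cast_smul_eq_nsmul α, smul_mulVec]

theorem IsSRGWith.eigenvalue_sq_eq [DecidableEq V] [Field α] (h : G.IsSRGWith n k ℓ μ) {θ : α}
    (hθ : θ ≠ k) {u : V → α} (hu0 : u ≠ 0) (hu : G.adjMatrix α *ᵥ u = θ • u) :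
    θ ^ 2 = k + ℓ * θ - μ * (1 + θ) := by
  have hsum := h.regular.sum_eq_zero_of_adjMatrix_mulVec_eq_smul hθ hu
  have h2 := h.adjMatrix_mulVec_mulVec u
  rw [hu, mulVec_smul, hu, hsum] at h2
  obtain ⟨x, hx⟩ := Function.ne_iff.mp hu0
  have := congrFun h2 x
  simp only [Pi.smul_apply, smul_eq_mul, zero_smul, zero_sub, Pi.add_apply, Pi.sub_apply,
    Pi.neg_apply] at this
  apply mul_right_cancel₀ hx
  linear_combination this

section Delsarte

variable [DecidableEq V] {C : Finset V} {θ : ℝ}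

noncomputable def delsarteDefect (G : SimpleGraph V) [DecidableRel G.Adj] (k μ : ℕ) (θ : ℝ)
    (C : Finset V) : V → ℝ :=
  -θ • G.adjMatrix ℝ *ᵥ (C : Set V).indicator 1 - ((k : ℝ) - μ) • (C : Set V).indicator 1
    - (μ : ℝ) • 1

theorem IsSRGWith.adjMatrix_mulVec_delsarteDefect (h : G.IsSRGWith n k ℓ μ)
    (hθ : θ ^ 2 = k + ℓ * θ - μ * (1 + θ)) (hcard : -θ * (#C - 1) = k) :
    G.adjMatrix ℝ *ᵥ delsarteDefect G k μ θ C = θ • delsarteDefect G k μ θ C := by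
  have hsum : ∑ x, (C : Set V).indicator (1 : V → ℝ) x = #C := by
    simp [Set.indicator_apply]
  simp only [delsarteDefect, mulVec_sub, mulVec_smul, h.adjMatrix_mulVec_mulVec, hsum,
    h.regular.adjMatrix_mulVec_one]
  linear_combination (norm := module) hθ • G.adjMatrix ℝ *ᵥ (C : Set V).indicator 1
    + ((μ : ℝ) * hcard) • (1 : V → ℝ)

theorem delsarteDefect_apply (x : V) :
    delsarteDefect G k μ θ C x
      = -θ * #{z ∈ C | G.Adj x z} - (if x ∈ C then (k : ℝ) - μ else 0) - μ := by
  simp only [delsarteDefect, Pi.sub_apply, Pi.smul_apply, adjMatrix_mulVec_indicator_apply,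
    Set.indicator_apply, Finset.mem_coe, Pi.one_apply, smul_eq_mul, mul_one, mul_ite, mul_zero]

theorem delsarteDefect_eq_zero_of_mem (hC : G.IsClique (C : Set V)) (hcard : -θ * (#C - 1) = k)
    {x : V} (hx : x ∈ C) : delsarteDefect G k μ θ C x = 0 := by
  have hE : (#{z ∈ C | G.Adj x z} : ℝ) = #C - 1 := by
    rw [← hC.card_filter_adj_add_one hx]
    push_cast
    ring
  rw [delsarteDefect_apply, hE, if_pos hx]
  linear_combination hcard

theorem IsSRGWith.delsarteDefect_eq_zero (h : G.IsSRGWith n k ℓ μ) (hθk : θ ≠ k)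
    (hθ : θ ^ 2 = k + ℓ * θ - μ * (1 + θ)) (hC : G.IsClique (C : Set V))
    (hcard : -θ * (#C - 1) = k) : delsarteDefect G k μ θ C = 0 := by
  set d := delsarteDefect G k μ θ C with hd
  have hAd := h.adjMatrix_mulVec_delsarteDefect hθ hcard
  have hdχ : d ⬝ᵥ (C : Set V).indicator 1 = 0 := by
    refine Finset.sum_eq_zero fun x _ => ?_
    by_cases hx : x ∈ C
    · simp [d, delsarteDefect_eq_zero_of_mem hC hcard hx]
    · simp [hx]
  have hdE : d ⬝ᵥ G.adjMatrix ℝ *ᵥ (C : Set V).indicator 1 = 0 := by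
    rw [dotProduct_mulVec, ← mulVec_transpose, transpose_adjMatrix, hAd, smul_dotProduct, hdχ,
      smul_zero]
  have hd1 : d ⬝ᵥ 1 = 0 := by
    simpa [dotProduct_one] using h.regular.sum_eq_zero_of_adjMatrix_mulVec_eq_smul hθk hAd
  have hdd : d ⬝ᵥ d = 0 := by
    conv_lhs => enter [2]; rw [hd, delsarteDefect]
    simp only [dotProduct_sub, dotProduct_smul, hdE, hdχ, hd1, smul_zero, sub_zero]
  exact dotProduct_self_eq_zero.mp hdd

theorem IsSRGWith.neg_mul_card_filter_adj_eq_of_isClique (h : G.IsSRGWith n k ℓ μ)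
    (hθ : θ ∈ spectrum ℝ (G.adjMatrix ℝ)) (hθk : θ ≠ k) (hC : G.IsClique (C : Set V))
    (hcard : -θ * (#C - 1) = k) {y : V} (hy : y ∉ C) : -θ * #{z ∈ C | G.Adj y z} = μ := by
  obtain ⟨u, hu0, hu⟩ := Matrix.exists_mulVec_eq_smul_of_mem_spectrum hθ
  have hdy := congrFun (h.delsarteDefect_eq_zero hθk (h.eigenvalue_sq_eq hθk hu0 hu) hC hcard) y
  rw [delsarteDefect_apply, if_neg hy] at hdy
  simpa [sub_eq_zero] using hdy

end Delsarte

end SimpleGraph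

/-- Regularity of Delsarte cliques: let `Γ` be strongly regular with parameters
`(v,k,λ,μ)` and smallest adjacency eigenvalue `-m` (`m ≥ 1` an integer), and let `C` be a
Delsarte clique, i.e. a clique of order `1 + k/m`. Then every vertex outside `C` has
exactly `μ/m` neighbors in `C`. -/
theorem delsarte_clique_regular {V : Type*} [Fintype V] [DecidableEq V]
    (G : SimpleGraph V) [DecidableRel G.Adj] (v k lam μ m : ℕ)
    (hm : 1 ≤ m) (hmk : m ∣ k)
    (hsrg : G.IsSRGWith v k lam μ)
    (hspec : IsLeast (spectrum ℝ (G.adjMatrix ℝ)) (-(m : ℝ)))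
    (C : Finset V) (hclique : G.IsClique (C : Set V))
    (hcard : C.card = 1 + k / m) :
    ∀ y ∉ C, ((C.filter (fun z => G.Adj y z)).card : ℕ) * m = μ := by
  intro y hy
  have hmk_pos : -(m : ℝ) ≠ k := by
    have : (1 : ℝ) ≤ m := by exact_mod_cast hm
    linarith [k.cast_nonneg (α := ℝ)]
  have hdelsarte : -(-(m : ℝ)) * (#C - 1) = k := by
    rw [hcard, neg_neg, Nat.cast_add, Nat.cast_one, add_sub_cancel_left, ← Nat.cast_mul,
      Nat.mul_div_cancel' hmk]
  have h := hsrg.neg_mul_card_filter_adj_eq_of_isClique hspec.1 hmk_pos hclique hdelsarte hy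
  rw [neg_neg, mul_comm] at h
  exact_mod_cast h
end

section
/- Let Γ be a strongly regular graph with parameters (v,k,λ,μ) whose adjacency matrix has smallest eigenvalue -m. Then any clique in Γ has order at most 1 + k/m (the Delsarte bound). -/
/-!
Let `r` and `-m` be the roots of `x² - (λ - μ) x - (k - μ)`, so that the strongly regular identity
`A² = (k - μ) I + (λ - μ) A + μ J` becomes `(A - r I)(A + m I) = μ J`. Since `J A = k J`, the
symmetric matrix `Q = μ J - (k + m)(A - r I)` is killed by `A + m I` on the right, whence
`Q² = (k + m)(m + r) Q`: up to a positive factor `Q` is the orthogonal projection onto the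
`-m`-eigenspace, hence positive semidefinite. Its quadratic form at the indicator vector of a
clique of size `c` equals `c (1 + r)(k + m - m c)`, and `r ≥ 0` because `r m = k - μ ≥ 0`.
-/

open Matrix SimpleGraph Finset
open scoped ComplexOrder

namespace Matrix

variable {n : Type*} [Fintype n]

theorem IsHermitian.posSemidef_of_mul_self_eq_smul {𝕜 : Type*} [RCLike 𝕜] {Q : Matrix n n 𝕜}
    (hQ : Q.IsHermitian) {α : ℝ} (hα : 0 < α) (h : Q * Q = α • Q) : Q.PosSemidef := by
  have : Q = α⁻¹ • (Qᴴ * Q) := by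
    rw [hQ.eq, h, smul_smul, inv_mul_cancel₀ hα.ne', one_smul]
  rw [this]
  exact (posSemidef_conjTranspose_mul_self Q).smul (inv_nonneg.mpr hα.le)

theorem exists_mulVec_eq_smul_of_mem_spectrum_s18 [DecidableEq n] {K : Type*} [Field K]
    {A : Matrix n n K} {θ : K} (h : θ ∈ spectrum K A) : ∃ u ≠ 0, A *ᵥ u = θ • u := by
  rw [← spectrum_toLin'] at h
  obtain ⟨u, hu⟩ := (Module.End.HasEigenvalue.of_mem_spectrum h).exists_hasEigenvector
  exact ⟨u, hu.2, by simpa using hu.apply_eq_smul⟩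

theorem indicator_dotProduct_mulVec_indicator {R : Type*} [NonAssocSemiring R]
    (M : Matrix n n R) (s : Finset n) :
    (s : Set n).indicator 1 ⬝ᵥ M *ᵥ (s : Set n).indicator 1 = ∑ i ∈ s, ∑ j ∈ s, M i j := by
  classical
  simp [dotProduct, mulVec, Set.indicator_apply, Finset.mul_sum]

end Matrix

namespace SimpleGraph

variable {V : Type*} {G : SimpleGraph V} [DecidableRel G.Adj] {n k ℓ μ : ℕ}

theorem IsClique.adjMatrix_apply_of_mem [DecidableEq V] {R : Type*} [AddGroupWithOne R]
    {s : Finset V} (hs : G.IsClique (s : Set V)) {i j : V} (hi : i ∈ s) (hj : j ∈ s) :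
    G.adjMatrix R i j = 1 - (1 : Matrix V V R) i j := by
  obtain rfl | hij := eq_or_ne i j
  · simp
  · simp [hs hi hj hij, one_apply_ne hij]

theorem IsClique.indicator_dotProduct_mulVec_indicator [Fintype V] [DecidableEq V] {s : Finset V}
    (hs : G.IsClique (s : Set V)) (a b r : ℝ) :
    (s : Set V).indicator 1 ⬝ᵥ (a • of 1 - b • (G.adjMatrix ℝ - r • 1)) *ᵥ (s : Set V).indicator 1
      = #s * ((a - b) * #s + b * (1 + r)) := by
  have hentry : ∀ i ∈ s, ∀ j ∈ s, (a • of 1 - b • (G.adjMatrix ℝ - r • 1) : Matrix V V ℝ) i j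
      = (a - b) + b * (1 + r) * (1 : Matrix V V ℝ) i j := by
    intro i hi j hj
    simp only [Matrix.sub_apply, Matrix.smul_apply, of_apply, hs.adjMatrix_apply_of_mem hi hj,
      smul_eq_mul, Pi.one_apply]
    ring
  rw [Matrix.indicator_dotProduct_mulVec_indicator,
    Finset.sum_congr rfl fun i hi => Finset.sum_congr rfl (hentry i hi)]
  simp [Finset.sum_add_distrib, one_apply]
  ring

theorem IsSRGWith.mu_le_of_not_adj [Fintype V] (h : G.IsSRGWith n k ℓ μ) {v w : V}
    (hne : v ≠ w) (hnadj : ¬G.Adj v w) : μ ≤ k := by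
  rw [← h.of_not_adj hne hnadj, ← h.regular v]
  exact G.card_commonNeighbors_le_degree_left v w

/-- Only a complete graph can have `μ > k`, and there `μ` is arbitrary. -/
theorem IsSRGWith.exists_isSRGWith_mu_le [Fintype V] (h : G.IsSRGWith n k ℓ μ) :
    ∃ μ' ≤ k, G.IsSRGWith n k ℓ μ' := by
  by_cases hcomplete : ∀ v w : V, v ≠ w → G.Adj v w
  · exact ⟨0, Nat.zero_le k,
      { h with of_not_adj := fun v w hne hnadj => (hnadj (hcomplete v w hne)).elim }⟩
  · push Not at hcomplete
    obtain ⟨v, w, hne, hnadj⟩ := hcomplete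
    exact ⟨μ, h.mu_le_of_not_adj hne hnadj, h⟩

variable [Fintype V]

theorem IsRegularOfDegree.of_one_mul_adjMatrix {R : Type*} [NonAssocSemiring R]
    (h : G.IsRegularOfDegree k) : of 1 * G.adjMatrix R = (k : R) • of 1 := by
  ext i j
  simp [mul_adjMatrix_apply, h j]

theorem IsRegularOfDegree.of_one_mulVec_eq_zero {K : Type*} [Field K]
    (h : G.IsRegularOfDegree k) {u : V → K} {θ : K} (hu : G.adjMatrix K *ᵥ u = θ • u)
    (hθ : θ ≠ k) : (of 1 : Matrix V V K) *ᵥ u = 0 := by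
  have : (θ - k) • ((of 1 : Matrix V V K) *ᵥ u) = 0 := by
    rw [sub_smul, ← mulVec_smul, ← hu, mulVec_mulVec, h.of_one_mul_adjMatrix, smul_mulVec,
      sub_self]
  exact (smul_eq_zero.mp this).resolve_left (sub_ne_zero.mpr hθ)

variable [DecidableEq V]

theorem IsRegularOfDegree.posSemidef_of_mul_eq_smul_of_one (h : G.IsRegularOfDegree k)
    {r m c : ℝ} (hfac : (G.adjMatrix ℝ - r • 1) * (G.adjMatrix ℝ + m • 1) = c • of 1)
    (hkm : 0 < k + m) (hmr : 0 < m + r) :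
    (c • of 1 - ((k : ℝ) + m) • (G.adjMatrix ℝ - r • 1)).PosSemidef := by
  set A := G.adjMatrix ℝ
  set Q := c • of 1 - ((k : ℝ) + m) • (A - r • 1) with hQ
  have hQ_factor : Q = (A - r • 1) * (A + m • 1) - ((k : ℝ) + m) • (A - r • 1) := by rw [hQ, hfac]
  have hJ : (of 1 : Matrix V V ℝ) * (A + m • 1) = ((k : ℝ) + m) • of 1 := by
    rw [mul_add, h.of_one_mul_adjMatrix, Matrix.mul_smul, Matrix.mul_one, add_smul]
  have hQm : Q * (A + m • 1) = 0 := by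
    rw [hQ, sub_mul, Matrix.smul_mul, Matrix.smul_mul, hJ, hfac, smul_comm, sub_self]
  have hQr : Q * (A - r • 1) = -(m + r) • Q := by
    have : A - r • 1 = (A + m • 1) - (m + r) • 1 := by module
    rw [this, mul_sub, hQm, Matrix.mul_smul, Matrix.mul_one, zero_sub, neg_smul]
  have hQQ : Q * Q = (((k : ℝ) + m) * (m + r)) • Q := by
    calc Q * Q = Q * ((A - r • 1) * (A + m • 1) - ((k : ℝ) + m) • (A - r • 1)) := by
          rw [← hQ_factor]
      _ = (((k : ℝ) + m) * (m + r)) • Q := by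
          rw [mul_sub, ← Matrix.mul_assoc, hQr, Matrix.smul_mul, hQm, Matrix.mul_smul, hQr]
          module
  have hQsymm : Q.IsHermitian := by
    ext i j
    simp [hQ, A, adjMatrix_apply, adj_comm, one_apply, eq_comm]
  exact hQsymm.posSemidef_of_mul_self_eq_smul (mul_pos hkm hmr) hQQ

theorem IsSRGWith.adjMatrix_sq {R : Type*} [CommRing R] (h : G.IsSRGWith n k ℓ μ) :
    G.adjMatrix R ^ 2 =
      ((k : R) - μ) • 1 + ((ℓ : R) - μ) • G.adjMatrix R + (μ : R) • of 1 := by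
  classical
  have hcompl : Gᶜ.adjMatrix R = of 1 - 1 - G.adjMatrix R := by
    rw [← one_add_adjMatrix_add_compl_adjMatrix_eq_of_one (G := G) (α := R),
      compl_adjMatrix_eq_adjMatrix_compl]
    abel
  rw [h.matrix_eq, hcompl]
  simp only [← Nat.cast_smul_eq_nsmul R]
  module

theorem IsSRGWith.eigenvalue_sq {K : Type*} [Field K] (h : G.IsSRGWith n k ℓ μ)
    {u : V → K} {θ : K} (hu0 : u ≠ 0) (hu : G.adjMatrix K *ᵥ u = θ • u) (hθ : θ ≠ k) :
    θ ^ 2 = (k - μ) + (ℓ - μ) * θ := by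
  have hJ := IsRegularOfDegree.of_one_mulVec_eq_zero h.regular hu hθ
  refine smul_left_injective K hu0 (?_ : θ ^ 2 • u = _ • u)
  calc θ ^ 2 • u = G.adjMatrix K ^ 2 *ᵥ u := by
        rw [sq (G.adjMatrix K), ← mulVec_mulVec, hu, mulVec_smul, hu, smul_smul, sq]
    _ = ((k - μ) + (ℓ - μ) * θ) • u := by
        rw [h.adjMatrix_sq]
        simp only [add_mulVec, smul_mulVec, one_mulVec, hu, hJ, smul_zero]
        module

theorem IsSRGWith.adjMatrix_sub_mul_adjMatrix_add {R : Type*} [CommRing R]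
    (h : G.IsSRGWith n k ℓ μ) {r m : R} (hsum : r - m = ℓ - μ) (hprod : r * m = k - μ) :
    (G.adjMatrix R - r • 1) * (G.adjMatrix R + m • 1) = (μ : R) • of 1 := by
  have hsq := h.adjMatrix_sq (R := R)
  rw [← hsum, ← hprod] at hsq
  rw [sub_mul, mul_add, mul_add, ← sq, hsq]
  simp only [Matrix.smul_mul, Matrix.mul_smul, Matrix.one_mul, Matrix.mul_one]
  module

theorem IsSRGWith.card_le_one_add_div_of_isClique (h : G.IsSRGWith n k ℓ μ) (hμ : μ ≤ k)
    {m : ℝ} (hm : 0 < m) (hspec : -m ∈ spectrum ℝ (G.adjMatrix ℝ)) {s : Finset V}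
    (hs : G.IsClique (s : Set V)) : (#s : ℝ) ≤ 1 + k / m := by
  obtain ⟨u, hu0, hu⟩ := exists_mulVec_eq_smul_of_mem_spectrum_s18 hspec
  have hθ := h.eigenvalue_sq hu0 hu ((neg_neg_of_pos hm).trans_le k.cast_nonneg).ne
  set r : ℝ := ℓ - μ + m
  have hrm : r * m = k - μ := by linear_combination hθ
  have hr : 0 ≤ r := nonneg_of_mul_nonneg_left (hrm ▸ sub_nonneg.mpr (by exact_mod_cast hμ)) hm
  have hQ := h.regular.posSemidef_of_mul_eq_smul_of_one
    (h.adjMatrix_sub_mul_adjMatrix_add (r := r) (by ring) hrm) (by positivity) (by linarith)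
  have hx := hQ.dotProduct_mulVec_nonneg ((s : Set V).indicator 1)
  rw [star_trivial, hs.indicator_dotProduct_mulVec_indicator] at hx
  have hkey : 0 ≤ #s * (1 + r) * (k + m - m * #s) := by
    linear_combination hx + (#s : ℝ) ^ 2 * hrm
  rw [← sub_le_iff_le_add', le_div_iff₀ hm]
  obtain hs_empty | hs_pos := (Nat.cast_nonneg (α := ℝ) #s).eq_or_lt
  · rw [← hs_empty]
    linarith [(k.cast_nonneg : (0 : ℝ) ≤ k)]
  · linarith [nonneg_of_mul_nonneg_right hkey (by positivity)]

end SimpleGraph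

/-- The Delsarte bound: let `Γ` be a strongly regular graph with parameters `(v,k,λ,μ)`
whose adjacency matrix has smallest eigenvalue `-m` (`m > 0`). Then any clique in `Γ` has
order at most `1 + k/m`. -/
theorem delsarte_bound {V : Type*} [Fintype V] [DecidableEq V]
    (G : SimpleGraph V) [DecidableRel G.Adj] (v k lam μ : ℕ) (m : ℝ) (hm : 0 < m)
    (hsrg : G.IsSRGWith v k lam μ)
    (hspec : IsLeast (spectrum ℝ (G.adjMatrix ℝ)) (-m))
    (s : Finset V) (hclique : G.IsClique (s : Set V)) :
    (s.card : ℝ) ≤ 1 + (k : ℝ) / m := by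
  obtain ⟨μ', hμ', hsrg'⟩ := hsrg.exists_isSRGWith_mu_le
  exact hsrg'.card_le_one_add_div_of_isClique hμ' hm hspec.1 hclique
end
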